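/- arXiv:2210.08916 — 4 statements merged into one kernel-verified Lean document; each statement's English description precedes it below -/
import Mathlib

section
/- Solving the GFM system implies G^π = ⟨φρ⟩^{-1}[(p_{c2} − p_{c1} − ζ)/h + Ξ^π ξ] with Ξˡ = −φᵍρᵍ, Ξᵍ = φˡρˡ, and in particular Gᵍ − Gˡ = ξ holds identically. -/
/-- Solving the GFM system yields G^π = ⟨φρ⟩⁻¹[(p₂ − p₁ − ζ)/h + Ξ^π ξ], with
Ξˡ = −φᵍρᵍ, Ξᵍ = φˡρˡ, and Gᵍ − Gˡ = ξ holds identically. -/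
theorem gfm_gradient_formula
    (p1 p2 ζ ξ h ρl ρg φl φg Gg Gl : ℝ)
    (hh : 0 < h) (hsum : φl + φg = 1) (hpos : 0 < φl * ρl + φg * ρg)
    (h1 : (p2 - φg * h * ρg * Gg) - (p1 + φl * h * ρl * Gl) = ζ)
    (h2 : Gg - Gl = ξ) :
    Gg = (φl * ρl + φg * ρg)⁻¹ * ((p2 - p1 - ζ) / h + (φl * ρl) * ξ) ∧
    Gl = (φl * ρl + φg * ρg)⁻¹ * ((p2 - p1 - ζ) / h + (-(φg * ρg)) * ξ) ∧
    Gg - Gl = ξ := by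
  have hh' : h ≠ 0 := hh.ne'
  have hp : φl * ρl + φg * ρg ≠ 0 := hpos.ne'
  have eg : (p2 - p1 - ζ) / h + (φl * ρl) * ξ = (φl * ρl + φg * ρg) * Gg := by
    field_simp
    linear_combination h1 - (φl * ρl * h) * h2
  have el : (p2 - p1 - ζ) / h + (-(φg * ρg)) * ξ = (φl * ρl + φg * ρg) * Gl := by
    field_simp
    linear_combination h1 + (φg * ρg * h) * h2
  exact ⟨by rw [eg, inv_mul_cancel_left₀ hp],
         by rw [el, inv_mul_cancel_left₀ hp], h2⟩
end

section
/- Consider a two-point gradient operator (∇p)_f = (p_{c2} − p_{c1})/h_f on a grid with two cells per face. Suppose for each face f and each phase π ∈ {l,g}: either (i) q(x^I_{c1}) = 0 = q(x^I_{c2}), or (ii) the indicator values χ^π_{c1} = χ^π_{c2} = a^π_f, or (iii) exactly one cell (say c1) satisfies q(x^I_{c1}) = 0 while for the other χ^π_{c2} = a^π_f ∈ {0,1}. Then in all three cases the identity (∇(χ^π q(x^I)))_f = a^π_f (∇ q(x^I))_f holds. -/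
/-- The key identity of the mimetic gravity model (Lemma A.1), per face:
in each of the three cases the two-point gradient satisfies
(∇(χ q(x^I)))_f = a_f (∇ q(x^I))_f. -/
theorem mgm_reduced_equality
    (q1 q2 χ1 χ2 a o1 o2 h : ℝ) (hh : 0 < h) (ho : o1 = -o2)
    (hcase :
      (q1 = 0 ∧ q2 = 0) ∨
      (χ1 = a ∧ χ2 = a) ∨
      (q1 = 0 ∧ χ2 = a ∧ (a = 0 ∨ a = 1))) :
    -(1 / h) * (o1 * (χ1 * q1) + o2 * (χ2 * q2))
      = a * (-(1 / h) * (o1 * q1 + o2 * q2)) := by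
  rcases hcase with ⟨h1, h2⟩ | ⟨h1, h2⟩ | ⟨h1, h2, _⟩ <;> subst_vars <;> ring
end

section
/- Well-balancedness of the mimetic gravity model: if q(x) = N·x − S with N = −g/|g| and the identity ∇ₕ(χ^π q(x^I)) = a^π ∇ₕ(q(x^I)) holds for each phase, then the pressure p† = −(χˡρˡ + χᵍρᵍ)|g| q(x^I) satisfies ∇ₕ p† = (aˡρˡ + aᵍρᵍ) ∇ₕ(g·x^I), i.e., the discrete pressure gradient exactly balances the mimetic gravity force F = ⟨aρ⟩ ∇ₕ(g·x^I). -/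
open RealInnerProductSpace

/-- Well-balancedness of the mimetic gravity model: with q(x) = N·x − S,
N = −g/|g|, and the reduced equality ∇ₕ(χ^π q(x^I)) = a^π ∇ₕ(q(x^I)) for each
phase, the pressure p† = −(χˡρˡ + χᵍρᵍ)|g| q(x^I) satisfies
∇ₕ p† = (aˡρˡ + aᵍρᵍ) ∇ₕ(g·x^I). -/
theorem mgm_well_balanced {d : ℕ} (C F : Type)
    (gradh : (C → ℝ) →ₗ[ℝ] (F → ℝ))
    (hconst : ∀ r : ℝ, gradh (fun _ => r) = 0)
    (g : EuclideanSpace ℝ (Fin d)) (hg : g ≠ 0) (S : ℝ)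
    (xI : C → EuclideanSpace ℝ (Fin d))
    (χl χg : C → ℝ) (al ag : F → ℝ) (ρl ρg : ℝ)
    (hρl : 0 < ρl) (hρg : 0 < ρg)
    (q : C → ℝ) (hq : ∀ c, q c = ⟪-(‖g‖⁻¹) • g, xI c⟫ - S)
    (hredl : gradh (fun c => χl c * q c) = fun f => al f * gradh q f)
    (hredg : gradh (fun c => χg c * q c) = fun f => ag f * gradh q f) :
    gradh (fun c => -((χl c * ρl + χg c * ρg) * ‖g‖ * q c))
      = fun f => (al f * ρl + ag f * ρg) * gradh (fun c => ⟪g, xI c⟫) f := by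
  have hgn : ‖g‖ ≠ 0 := norm_ne_zero_iff.mpr hg
  -- express inner product in terms of q
  have hinner : (fun c => ⟪g, xI c⟫) =
      (-‖g‖) • q + (fun _ => -(‖g‖ * S)) := by
    funext c
    have := hq c
    rw [real_inner_smul_left] at this
    have : q c = -(‖g‖⁻¹) * ⟪g, xI c⟫ - S := this
    simp only [Pi.add_apply, Pi.smul_apply, smul_eq_mul]
    field_simp at this ⊢
    linarith
  have hinner' : gradh (fun c => ⟪g, xI c⟫) = fun f => -‖g‖ * gradh q f := by
    rw [hinner, map_add, map_smul, hconst]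
    funext f
    simp
  -- express pressure as combination
  have hp : (fun c => -((χl c * ρl + χg c * ρg) * ‖g‖ * q c)) =
      (-(ρl * ‖g‖)) • (fun c => χl c * q c) + (-(ρg * ‖g‖)) • (fun c => χg c * q c) := by
    funext c
    simp only [Pi.add_apply, Pi.smul_apply, smul_eq_mul]
    ring
  rw [hp, map_add, map_smul, map_smul, hredl, hredg, hinner']
  funext f
  simp only [Pi.add_apply, Pi.smul_apply, smul_eq_mul]
  ring
end

section
/- One-velocity recovery: let m^l, m^g > 0 be staggered masses and u^{l,***}, u^{g,***} real. If the two-velocity projection update is u^{π,(n+1)} = u^{π,***} − δt·(G + ζD + Ξ^π ξ)/(m^l + m^g) with Ξˡ = −m^g, Ξᵍ = m^l, and the jump is fully removed by choosing ξ = (u^{g,***} − u^{l,***})/δt, then both updated velocities coincide and equal (m^l u^{l,***} + m^g u^{g,***})/(m^l + m^g) − δt(G + ζD)/(m^l + m^g), i.e., the one-velocity formulation with the mass-weighted average velocity. -/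
/-!
Since `δt · ξ = ug - ul`, the term `Ξ^π ξ` contributes `Ξ^π (ug - ul) / (ml + mg)` to each
update, independently of `δt`. With `Ξˡ = -mg` and `Ξᵍ = ml` this moves `ul` forward, and `ug`
backward, by the fraction of the jump that yields the mass-weighted average.
-/

section JumpRemoval

variable {K : Type*} [Field K]

theorem sub_mul_div_jump_div_eq {u F Ξ ul ug δt M : K} (hδt : δt ≠ 0) :
    u - δt * (F + Ξ * ((ug - ul) / δt)) / M = u - Ξ * (ug - ul) / M - δt * F / M := by
  field_simp
  ring

theorem sub_neg_mul_div_eq_weighted_avg {ml mg ul ug : K} (hm : ml + mg ≠ 0) :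
    ul - -mg * (ug - ul) / (ml + mg) = (ml * ul + mg * ug) / (ml + mg) := by
  field_simp
  ring

theorem sub_mul_div_eq_weighted_avg {ml mg ul ug : K} (hm : ml + mg ≠ 0) :
    ug - ml * (ug - ul) / (ml + mg) = (ml * ul + mg * ug) / (ml + mg) := by
  field_simp
  ring

end JumpRemoval

/-- One-velocity recovery: removing the jump (ξ = ⟦u⟧/δt) in the two-velocity
projection yields identical updated velocities equal to the mass-weighted
one-velocity update. -/
theorem one_velocity_recovery
    (ml mg ul ug G D ζ δt : ℝ)
    (hml : 0 < ml) (hmg : 0 < mg) (hδt : 0 < δt) :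
    let ξ := (ug - ul) / δt
    (ul - δt * (G + ζ * D + (-mg) * ξ) / (ml + mg)
        = (ml * ul + mg * ug) / (ml + mg) - δt * (G + ζ * D) / (ml + mg)) ∧
    (ug - δt * (G + ζ * D + ml * ξ) / (ml + mg)
        = (ml * ul + mg * ug) / (ml + mg) - δt * (G + ζ * D) / (ml + mg)) := by
  intro ξ
  have hm : ml + mg ≠ 0 := (add_pos hml hmg).ne'
  simp only [ξ, sub_mul_div_jump_div_eq hδt.ne', sub_neg_mul_div_eq_weighted_avg hm,
    sub_mul_div_eq_weighted_avg hm, and_self]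
end
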